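/- arXiv:2308.00079 — 3 statements merged into one kernel-verified Lean document; each statement's English description precedes it below -/
import Mathlib

section
/- Existence and regularity of dual maximizers: if (Ω,d) is a compact metric space, each pairwise term f_e : Ω×Ω → ℝ is continuous admitting a modulus of continuity ω_e, and each f_u : Ω → ℝ is lower semicontinuous, then there exists a maximizer (φ,ψ) ∈ C(Ω)^E × C(Ω)^E of (R-D) such that for every edge e, φ_e is f_e-concave and ψ_e = (φ_e)^{f_e} is the f_e-transform of φ_e; in particular φ_e and ψ_e both admit the modulus of continuity ω_e. -/
/-!
Replacing a feasible pair `(φ, ψ)` on an edge by the `c`-conjugate pair `(χ, φᶜ)`, where `χ` is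
the transform of `φᶜ` for the transposed cost, can only increase both potentials, hence the dual
value, and the new pair inherits the modulus of continuity `ω` of `c`. The gauge
`(φ, ψ) ↦ (φ - a, ψ + a)` leaves the dual value unchanged, so one may also impose `φ x₀ = 0`,
which bounds `ψ x₀`. By Arzelà–Ascoli these normalized families form a compact set, on which the
dual value, 1-Lipschitz in the potentials, attains its maximum; conjugating the maximizer once
more keeps it maximal and makes it `c`-conjugate.
-/

open MeasureTheory

/-- The linear map `A_u(φ, ψ) = -∑_{v : (u,v) ∈ E} φ_{(u,v)} - ∑_{v : (v,u) ∈ E} ψ_{(v,u)}`. -/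
noncomputable def Afun {Ω : Type*} [TopologicalSpace Ω] {V : Type*} [DecidableEq V]
    (E : Finset (V × V)) (φ ψ : V × V → C(Ω, ℝ)) (u : V) : C(Ω, ℝ) :=
  (-∑ e ∈ E.filter (fun e => e.1 = u), φ e) - ∑ e ∈ E.filter (fun e => e.2 = u), ψ e

/-- `φ` is `c`-concave: `φ x = inf_y (c x y - g y)` for some `g`. -/
def IsCConcave {Ω : Type*} (c : Ω → Ω → ℝ) (φ : Ω → ℝ) : Prop :=
  ∃ g : Ω → ℝ, ∀ x : Ω, φ x = ⨅ y : Ω, (c x y - g y)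

open Set Filter Topology Function

lemma MonotoneOn.apply_dist_le_apply_diam {X : Type*} [PseudoMetricSpace X] [CompactSpace X]
    {ω : ℝ → ℝ} (hω : MonotoneOn ω (Ici 0)) (x y : X) :
    ω (dist x y) ≤ ω (Metric.diam (univ : Set X)) := by
  have h := Metric.dist_le_diam_of_mem Metric.isBounded_of_compactSpace (mem_univ x) (mem_univ y)
  exact hω dist_nonneg (dist_nonneg.trans h) h

structure IsModulusOfContinuity {X : Type*} [PseudoMetricSpace X] (ω : ℝ → ℝ) (g : X → ℝ) :
    Prop where
  monotoneOn : MonotoneOn ω (Ici 0)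
  map_zero : ω 0 = 0
  continuousAt : ContinuousAt ω 0
  abs_sub_le : ∀ x y, |g x - g y| ≤ ω (dist x y)

namespace IsModulusOfContinuity

variable {X : Type*} [PseudoMetricSpace X] {ω : ℝ → ℝ} {g : X → ℝ}

lemma tendsto_zero (hω : IsModulusOfContinuity ω g) : Tendsto ω (𝓝 0) (𝓝 0) := by
  simpa [hω.map_zero] using hω.continuousAt.tendsto

lemma continuous (hω : IsModulusOfContinuity ω g) : Continuous g :=
  (Metric.uniformEquicontinuous_of_continuity_modulus ω hω.tendsto_zero (fun _ : Unit => g)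
    fun x y _ => by simpa only [Real.dist_eq] using hω.abs_sub_le x y).uniformContinuous ()
      |>.continuous

lemma uncurry_flip {c : X → X → ℝ} (hω : IsModulusOfContinuity ω (uncurry c)) :
    IsModulusOfContinuity ω (uncurry (flip c)) where
  __ := hω
  abs_sub_le p q := by
    have h := hω.abs_sub_le p.swap q.swap
    rwa [show dist p.swap q.swap = dist p q by simp [Prod.dist_eq, max_comm]] at h

end IsModulusOfContinuity

noncomputable def cTransform {Ω : Type*} (c : Ω → Ω → ℝ) (φ : Ω → ℝ) (y : Ω) : ℝ :=
  ⨅ x, c x y - φ x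

lemma le_cTransform {Ω : Type*} [Nonempty Ω] {c : Ω → Ω → ℝ} {φ : Ω → ℝ} {b : ℝ} {y : Ω}
    (h : ∀ x, b ≤ c x y - φ x) : b ≤ cTransform c φ y :=
  le_ciInf h

section CTransform

variable {Ω : Type*} [TopologicalSpace Ω] [CompactSpace Ω] {c : Ω → Ω → ℝ} {φ : Ω → ℝ}

lemma bddBelow_range_sub (hc : Continuous (uncurry c)) (hφ : BddAbove (range φ)) (y : Ω) :
    BddBelow (range fun x => c x y - φ x) := by
  obtain ⟨m, hm⟩ := (isCompact_range hc).bddBelow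
  obtain ⟨M, hM⟩ := hφ
  exact ⟨m - M, forall_mem_range.2 fun x => sub_le_sub (hm ⟨(x, y), rfl⟩) (hM ⟨x, rfl⟩)⟩

lemma cTransform_le (hc : Continuous (uncurry c)) (hφ : BddAbove (range φ)) (x y : Ω) :
    cTransform c φ y ≤ c x y - φ x :=
  ciInf_le (bddBelow_range_sub hc hφ y) x

lemma bddAbove_range_cTransform [Nonempty Ω] (hc : Continuous (uncurry c))
    (hφ : BddAbove (range φ)) : BddAbove (range (cTransform c φ)) := by
  obtain ⟨M, hM⟩ := (isCompact_range hc).bddAbove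
  inhabit Ω
  exact ⟨M - φ default, forall_mem_range.2 fun y =>
    (cTransform_le hc hφ default y).trans (sub_le_sub_right (hM ⟨(default, y), rfl⟩) _)⟩

lemma cTransform_sub_const [Nonempty Ω] (hc : Continuous (uncurry c)) (hφ : BddAbove (range φ))
    (a : ℝ) (y : Ω) : cTransform c (fun x => φ x - a) y = cTransform c φ y + a := by
  rw [cTransform, cTransform, ciInf_add (bddBelow_range_sub hc hφ y)]
  congr 1 with x
  ring

lemma cTransform_add_const [Nonempty Ω] (hc : Continuous (uncurry c)) (hφ : BddAbove (range φ))
    (a : ℝ) (y : Ω) : cTransform c (fun x => φ x + a) y = cTransform c φ y - a := by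
  simpa [← sub_eq_add_neg] using cTransform_sub_const hc hφ (-a) y

lemma le_cTransform_flip_cTransform [Nonempty Ω] (hc : Continuous (uncurry c))
    (hφ : BddAbove (range φ)) (x : Ω) : φ x ≤ cTransform (flip c) (cTransform c φ) x :=
  le_cTransform fun y => le_sub_comm.1 (cTransform_le hc hφ x y)

lemma cTransform_cTransform_flip_cTransform [Nonempty Ω] (hc : Continuous (uncurry c))
    (hφ : BddAbove (range φ)) :
    cTransform c (cTransform (flip c) (cTransform c φ)) = cTransform c φ := by
  have hc' : Continuous (uncurry (flip c)) := hc.comp continuous_swap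
  have hψ := bddAbove_range_cTransform hc hφ
  funext y
  refine le_antisymm (le_cTransform fun x => ?_) (le_cTransform fun x => ?_)
  · linarith [cTransform_le hc (bddAbove_range_cTransform hc' hψ) x y,
      le_cTransform_flip_cTransform hc hφ x]
  · have h : cTransform (flip c) (cTransform c φ) x ≤ c x y - cTransform c φ y :=
      cTransform_le hc' hψ y x
    linarith

end CTransform

lemma isModulusOfContinuity_cTransform {Ω : Type*} [MetricSpace Ω] [CompactSpace Ω] [Nonempty Ω]
    {c : Ω → Ω → ℝ} {φ : Ω → ℝ} {ω : ℝ → ℝ} (hω : IsModulusOfContinuity ω (uncurry c))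
    (hφ : BddAbove (range φ)) : IsModulusOfContinuity ω (cTransform c φ) where
  __ := hω
  abs_sub_le := by
    have key : ∀ y y', cTransform c φ y ≤ cTransform c φ y' + ω (dist y y') := by
      intro y y'
      rw [← sub_le_iff_le_add]
      refine le_cTransform fun x => ?_
      have hxy : c x y - c x y' ≤ ω (dist y y') := by
        simpa [Prod.dist_eq] using (le_abs_self _).trans (hω.abs_sub_le (x, y) (x, y'))
      linarith [cTransform_le hω.continuous hφ x y]
    intro y y'
    rw [abs_sub_le_iff]
    constructor
    · linarith [key y y']
    · linarith [dist_comm y y' ▸ key y' y]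

section ConjugatePair

variable {Ω : Type*} {c : Ω → Ω → ℝ} {φ ψ : Ω → ℝ}

def IsCConjugatePair (c : Ω → Ω → ℝ) (φ ψ : Ω → ℝ) : Prop :=
  φ = cTransform (flip c) ψ ∧ ψ = cTransform c φ

lemma isCConjugatePair_cTransform [TopologicalSpace Ω] [CompactSpace Ω] [Nonempty Ω]
    (hc : Continuous (uncurry c)) (hφ : BddAbove (range φ)) :
    IsCConjugatePair c (cTransform (flip c) (cTransform c φ)) (cTransform c φ) :=
  ⟨rfl, (cTransform_cTransform_flip_cTransform hc hφ).symm⟩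

namespace IsCConjugatePair

lemma isCConcave (h : IsCConjugatePair c φ ψ) : IsCConcave c φ :=
  ⟨ψ, congrFun h.1⟩

lemma add_le [TopologicalSpace Ω] [CompactSpace Ω] (h : IsCConjugatePair c φ ψ)
    (hc : Continuous (uncurry c)) (hφ : BddAbove (range φ)) (x y : Ω) : φ x + ψ y ≤ c x y := by
  rw [h.2]
  linarith [cTransform_le hc hφ x y]

lemma sub_const [TopologicalSpace Ω] [CompactSpace Ω] [Nonempty Ω] (h : IsCConjugatePair c φ ψ)
    (hc : Continuous (uncurry c)) (hφ : BddAbove (range φ)) (hψ : BddAbove (range ψ)) (a : ℝ) :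
    IsCConjugatePair c (fun x => φ x - a) (fun y => ψ y + a) := by
  have hc' : Continuous (uncurry (flip c)) := hc.comp continuous_swap
  constructor <;> funext z
  · rw [cTransform_add_const hc' hψ, ← h.1]
  · rw [cTransform_sub_const hc hφ, ← h.2]

lemma isModulusOfContinuity [MetricSpace Ω] [CompactSpace Ω] [Nonempty Ω] {ω : ℝ → ℝ}
    (h : IsCConjugatePair c φ ψ) (hω : IsModulusOfContinuity ω (uncurry c))
    (hφ : BddAbove (range φ)) (hψ : BddAbove (range ψ)) :
    IsModulusOfContinuity ω φ ∧ IsModulusOfContinuity ω ψ :=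
  ⟨h.1 ▸ isModulusOfContinuity_cTransform hω.uncurry_flip hψ,
    h.2 ▸ isModulusOfContinuity_cTransform hω hφ⟩

end IsCConjugatePair

end ConjugatePair

section NormalizedPairs

def feasiblePairs {Ω : Type*} [TopologicalSpace Ω] (c : Ω → Ω → ℝ) :
    Set (C(Ω, ℝ) × C(Ω, ℝ)) :=
  {P | ∀ x y, P.1 x + P.2 y ≤ c x y}

lemma isClosed_feasiblePairs {Ω : Type*} [TopologicalSpace Ω] (c : Ω → Ω → ℝ) :
    IsClosed (feasiblePairs c) := by
  simp only [feasiblePairs, ofPred_forall]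
  exact isClosed_iInter fun x => isClosed_iInter fun y => isClosed_le (by fun_prop) continuous_const

lemma nonempty_feasiblePairs {Ω : Type*} [TopologicalSpace Ω] [CompactSpace Ω]
    {c : Ω → Ω → ℝ} (hc : Continuous (uncurry c)) : (feasiblePairs c).Nonempty := by
  obtain ⟨m, hm⟩ := (isCompact_range hc).bddBelow
  exact ⟨(0, ContinuousMap.const Ω m), fun x y => by simpa using hm ⟨(x, y), rfl⟩⟩

variable {Ω : Type*} [MetricSpace Ω] {c : Ω → Ω → ℝ} {ω : ℝ → ℝ}

def modulusSet (ω : ℝ → ℝ) (x₀ : Ω) (a b : ℝ) : Set C(Ω, ℝ) :=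
  {h | (∀ x y, |h x - h y| ≤ ω (dist x y)) ∧ h x₀ ∈ Icc a b}

/-- The first factor encodes `φ x₀ = 0`, which fixes the gauge `(φ, ψ) ↦ (φ - a, ψ + a)`; the
bounds imposed on `ψ x₀` hold for every `c`-conjugate pair so normalized. -/
def normalizedPairs (c : Ω → Ω → ℝ) (ω : ℝ → ℝ) (x₀ : Ω) : Set (C(Ω, ℝ) × C(Ω, ℝ)) :=
  modulusSet ω x₀ 0 0 ×ˢ
    modulusSet ω x₀ ((⨅ x, c x x₀) - ω (Metric.diam (univ : Set Ω))) (c x₀ x₀) ∩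
  feasiblePairs c

lemma isCompact_modulusSet [CompactSpace Ω] (hmono : MonotoneOn ω (Ici 0)) (h0 : ω 0 = 0)
    (hcont : ContinuousAt ω 0) (x₀ : Ω) (a b : ℝ) : IsCompact (modulusSet ω x₀ a b) := by
  let D := ω (Metric.diam (univ : Set Ω))
  let C : Set (Ω → ℝ) := {g | (∀ x y, |g x - g y| ≤ ω (dist x y)) ∧ g x₀ ∈ Icc a b}
  have hC : IsCompact C := by
    refine (isCompact_univ_pi fun _ => isCompact_Icc (a := a - D) (b := b + D)).of_isClosed_subset
      ?_ fun g hg x _ => ?_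
    · simp only [C, ofPred_and, ofPred_forall]
      exact (isClosed_iInter fun x => isClosed_iInter fun y =>
        isClosed_le (by fun_prop) continuous_const).inter
        (isClosed_Icc.preimage (continuous_apply x₀))
    · have hx := abs_le.1 ((hg.1 x x₀).trans (hmono.apply_dist_le_apply_diam x x₀))
      exact ⟨by linarith [hg.2.1], by linarith [hg.2.2]⟩
  refine ArzelaAscoli.isCompact_of_equicontinuous _ ?_ ?_
  · convert hC
    ext g
    refine ⟨?_, fun hg => ⟨⟨g, IsModulusOfContinuity.continuous ⟨hmono, h0, hcont, hg.1⟩⟩, hg, rfl⟩⟩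
    rintro ⟨h, hh, rfl⟩
    exact hh
  · exact Metric.equicontinuous_of_continuity_modulus ω (by simpa [h0] using hcont.tendsto) _
      fun x y h => by simpa only [Real.dist_eq] using h.2.1 x y

lemma isCompact_normalizedPairs [CompactSpace Ω] (hω : IsModulusOfContinuity ω (uncurry c))
    (x₀ : Ω) : IsCompact (normalizedPairs c ω x₀) :=
  ((isCompact_modulusSet hω.monotoneOn hω.map_zero hω.continuousAt x₀ _ _).prod
    (isCompact_modulusSet hω.monotoneOn hω.map_zero hω.continuousAt x₀ _ _)).inter_right
    (isClosed_feasiblePairs c)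

lemma mem_normalizedPairs [CompactSpace Ω] [Nonempty Ω] (hω : IsModulusOfContinuity ω (uncurry c))
    {x₀ : Ω} {Q : C(Ω, ℝ) × C(Ω, ℝ)} (hQ : IsCConjugatePair c Q.1 Q.2) (h0 : Q.1 x₀ = 0) :
    Q ∈ normalizedPairs c ω x₀ := by
  have hc := hω.continuous
  have hφ := (isCompact_range Q.1.continuous).bddAbove
  have hfeas : Q ∈ feasiblePairs c := hQ.add_le hc hφ
  obtain ⟨hφω, hψω⟩ := hQ.isModulusOfContinuity hω hφ (isCompact_range Q.2.continuous).bddAbove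
  refine ⟨⟨⟨hφω.abs_sub_le, by simp [h0]⟩, hψω.abs_sub_le, ?_, by linarith [hfeas x₀ x₀]⟩, hfeas⟩
  rw [hQ.2]
  refine le_cTransform fun x => ?_
  have hx : Q.1 x ≤ ω (Metric.diam (univ : Set Ω)) := by
    simpa [h0] using (le_abs_self _).trans ((hφω.abs_sub_le x x₀).trans
      (hω.monotoneOn.apply_dist_le_apply_diam x x₀))
  have hb : BddBelow (range fun x => c x x₀) :=
    (isCompact_range (hc.comp (continuous_id.prodMk continuous_const))).bddBelow
  linarith [ciInf_le hb x]

end NormalizedPairs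

lemma exists_normalizedPairs_ge {Ω : Type*} [MetricSpace Ω] [CompactSpace Ω] [Nonempty Ω]
    {c : Ω → Ω → ℝ} {ω : ℝ → ℝ} (hω : IsModulusOfContinuity ω (uncurry c)) (x₀ : Ω)
    {P : C(Ω, ℝ) × C(Ω, ℝ)} (hP : P ∈ feasiblePairs c) :
    ∃ a : ℝ, ∃ Q ∈ normalizedPairs c ω x₀,
      (P.1 - ContinuousMap.const Ω a, P.2 + ContinuousMap.const Ω a) ≤ Q ∧
      IsCConjugatePair c Q.1 Q.2 := by
  have hc := hω.continuous
  have hc' : Continuous (uncurry (flip c)) := hc.comp continuous_swap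
  have hφ₀ := (isCompact_range P.1.continuous).bddAbove
  set ψ := cTransform c P.1
  set φ := cTransform (flip c) ψ
  have hψ : BddAbove (range ψ) := bddAbove_range_cTransform hc hφ₀
  have hψc : Continuous ψ := (isModulusOfContinuity_cTransform hω hφ₀).continuous
  have hφc : Continuous φ := (isModulusOfContinuity_cTransform hω.uncurry_flip hψ).continuous
  let Q : C(Ω, ℝ) × C(Ω, ℝ) :=
    (⟨fun x => φ x - φ x₀, by fun_prop⟩, ⟨fun y => ψ y + φ x₀, by fun_prop⟩)
  have hQ : IsCConjugatePair c Q.1 Q.2 := (isCConjugatePair_cTransform hc hφ₀).sub_const hc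
    (bddAbove_range_cTransform hc' hψ) hψ (φ x₀)
  refine ⟨φ x₀, Q, mem_normalizedPairs hω hQ (sub_self _), ⟨?_, ?_⟩, hQ⟩
  · refine ContinuousMap.le_def.2 fun x => ?_
    simpa [Q] using le_cTransform_flip_cTransform hc hφ₀ x
  · refine ContinuousMap.le_def.2 fun y => ?_
    simpa [Q] using le_cTransform fun x => le_sub_iff_add_le'.2 (hP x y)

section Afun

variable {Ω : Type*} [TopologicalSpace Ω] {V : Type*} [DecidableEq V] {E : Finset (V × V)}

lemma Afun_apply (φ ψ : V × V → C(Ω, ℝ)) (u : V) (x : Ω) :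
    Afun E φ ψ u x =
      -(∑ e ∈ E.filter (fun e => e.1 = u), φ e x) - ∑ e ∈ E.filter (fun e => e.2 = u), ψ e x := by
  simp [Afun]

lemma Afun_le_Afun {φ ψ φ' ψ' : V × V → C(Ω, ℝ)} (hφ : ∀ e ∈ E, φ e ≤ φ' e)
    (hψ : ∀ e ∈ E, ψ e ≤ ψ' e) (u : V) : Afun E φ' ψ' u ≤ Afun E φ ψ u :=
  sub_le_sub (neg_le_neg (Finset.sum_le_sum fun e he => hφ e (Finset.mem_filter.1 he).1))
    (Finset.sum_le_sum fun e he => hψ e (Finset.mem_filter.1 he).1)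

end Afun

section DualValue

variable {Ω : Type*} [TopologicalSpace Ω] [CompactSpace Ω] {V : Type*} [Fintype V]
  [DecidableEq V] {E : Finset (V × V)} {f : V → Ω → ℝ}

noncomputable def dualValue (E : Finset (V × V)) (f : V → Ω → ℝ)
    (p : V × V → C(Ω, ℝ) × C(Ω, ℝ)) : ℝ :=
  ∑ u, ⨅ x, f u x - Afun E (fun e => (p e).1) (fun e => (p e).2) u x

lemma LowerSemicontinuous.bddBelow_range_sub {F : Ω → ℝ} (hF : LowerSemicontinuous F)
    (g : C(Ω, ℝ)) : BddBelow (range fun x => F x - g x) := by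
  obtain ⟨m, hm⟩ : BddBelow (range F) := by
    simpa using (hF.lowerSemicontinuousOn univ).bddBelow_of_isCompact isCompact_univ
  obtain ⟨M, hM⟩ := (isCompact_range g.continuous).bddAbove
  exact ⟨m - M, forall_mem_range.2 fun x => sub_le_sub (hm ⟨x, rfl⟩) (hM ⟨x, rfl⟩)⟩

lemma dualValue_mono (hf : ∀ u, LowerSemicontinuous (f u)) {p q : V × V → C(Ω, ℝ) × C(Ω, ℝ)}
    (h : ∀ e ∈ E, p e ≤ q e) : dualValue E f p ≤ dualValue E f q :=
  Finset.sum_le_sum fun u _ => ciInf_mono ((hf u).bddBelow_range_sub _) fun x =>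
    sub_le_sub_left (ContinuousMap.le_def.1
      (Afun_le_Afun (fun e he => (h e he).1) (fun e he => (h e he).2) u) x) _

lemma dualValue_shift [Nonempty Ω] (hf : ∀ u, LowerSemicontinuous (f u))
    (p : V × V → C(Ω, ℝ) × C(Ω, ℝ)) (a : V × V → ℝ) :
    dualValue E f (fun e => ((p e).1 - ContinuousMap.const Ω (a e),
      (p e).2 + ContinuousMap.const Ω (a e))) = dualValue E f p := by
  have key : ∀ u, (⨅ x, f u x - Afun E (fun e => (p e).1 - ContinuousMap.const Ω (a e))
      (fun e => (p e).2 + ContinuousMap.const Ω (a e)) u x) =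
      (⨅ x, f u x - Afun E (fun e => (p e).1) (fun e => (p e).2) u x) +
        (∑ e ∈ E.filter (fun e => e.2 = u), a e - ∑ e ∈ E.filter (fun e => e.1 = u), a e) := by
    intro u
    rw [ciInf_add ((hf u).bddBelow_range_sub _)]
    congr 1 with x
    simp only [Afun_apply, ContinuousMap.sub_apply, ContinuousMap.add_apply,
      ContinuousMap.const_apply, Finset.sum_sub_distrib, Finset.sum_add_distrib]
    ring
  simp only [dualValue, key, Finset.sum_add_distrib, Finset.sum_sub_distrib, Finset.sum_fiberwise,
    sub_self, add_zero]

lemma lipschitzWith_iInf_sub [Nonempty Ω] {F : Ω → ℝ} (hF : LowerSemicontinuous F) :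
    LipschitzWith 1 fun g : C(Ω, ℝ) => ⨅ x, F x - g x := by
  refine LipschitzWith.of_le_add fun g g' => ?_
  rw [ciInf_add (hF.bddBelow_range_sub g')]
  refine ciInf_mono (hF.bddBelow_range_sub g) fun x => ?_
  have h := (abs_le.1 (Real.dist_eq _ _ ▸ ContinuousMap.dist_apply_le_dist (f := g) (g := g') x))
  linarith [h.1]

lemma continuous_dualValue [Nonempty Ω] (hf : ∀ u, LowerSemicontinuous (f u)) :
    Continuous (dualValue E f) :=
  continuous_finsetSum _ fun u _ => (lipschitzWith_iInf_sub (hf u)).continuous.comp <| by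
    unfold Afun
    fun_prop

end DualValue

section Families

variable {Ω : Type*} [MetricSpace Ω] {V : Type*} [DecidableEq V]
  {E : Finset (V × V)} {c : V × V → Ω → Ω → ℝ} {ω : V × V → ℝ → ℝ}

/-- Edges outside `E` do not enter the dual value; they are pinned to `0`. -/
def normalizedFamilies (E : Finset (V × V)) (c : V × V → Ω → Ω → ℝ) (ω : V × V → ℝ → ℝ)
    (x₀ : Ω) : Set (V × V → C(Ω, ℝ) × C(Ω, ℝ)) :=
  univ.pi fun e => if e ∈ E then normalizedPairs (c e) (ω e) x₀ else {0}

lemma isCompact_normalizedFamilies [CompactSpace Ω]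
    (hω : ∀ e ∈ E, IsModulusOfContinuity (ω e) (uncurry (c e))) (x₀ : Ω) :
    IsCompact (normalizedFamilies E c ω x₀) :=
  isCompact_univ_pi fun e => by
    split_ifs with he
    exacts [isCompact_normalizedPairs (hω e he) x₀, isCompact_singleton]

lemma mem_normalizedPairs_of_mem_normalizedFamilies {x₀ : Ω}
    {p : V × V → C(Ω, ℝ) × C(Ω, ℝ)} (hp : p ∈ normalizedFamilies E c ω x₀) {e : V × V}
    (he : e ∈ E) : p e ∈ normalizedPairs (c e) (ω e) x₀ := by
  simpa [he] using hp e (mem_univ e)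

lemma exists_mem_normalizedFamilies_dualValue_le [CompactSpace Ω] [Nonempty Ω] [Fintype V]
    {f : V → Ω → ℝ} (hf : ∀ u, LowerSemicontinuous (f u))
    (hω : ∀ e ∈ E, IsModulusOfContinuity (ω e) (uncurry (c e))) (x₀ : Ω)
    {p : V × V → C(Ω, ℝ) × C(Ω, ℝ)} (hp : ∀ e ∈ E, p e ∈ feasiblePairs (c e)) :
    ∃ q ∈ normalizedFamilies E c ω x₀, dualValue E f p ≤ dualValue E f q ∧
      ∀ e ∈ E, IsCConjugatePair (c e) (q e).1 (q e).2 := by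
  choose! a q hq hle hconj using fun e he => exists_normalizedPairs_ge (hω e he) x₀ (hp e he)
  refine ⟨fun e => if e ∈ E then q e else 0, fun e _ => ?_, ?_, fun e he => by
    simpa [he] using hconj e he⟩
  · by_cases he : e ∈ E <;> simp [he, hq e]
  · calc dualValue E f p
        = dualValue E f fun e => ((p e).1 - ContinuousMap.const Ω (a e),
            (p e).2 + ContinuousMap.const Ω (a e)) := (dualValue_shift hf p a).symm
      _ ≤ _ := dualValue_mono hf fun e he => by simpa [he] using hle e he

end Families

theorem stmt_3_general {Ω : Type*} [MetricSpace Ω] [CompactSpace Ω] [Nonempty Ω]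
    (V : Type*) [Fintype V] [DecidableEq V] (E : Finset (V × V))
    (f : V → Ω → ℝ) (c : V × V → Ω → Ω → ℝ) (ω : V × V → ℝ → ℝ)
    (hf : ∀ u : V, LowerSemicontinuous (f u))
    (hω : ∀ e ∈ E, MonotoneOn (ω e) (Set.Ici (0 : ℝ)) ∧ ω e 0 = 0 ∧
      ContinuousAt (ω e) 0 ∧
      ∀ p q : Ω × Ω, |c e p.1 p.2 - c e q.1 q.2| ≤ ω e (dist p q)) :
    ∃ φ ψ : V × V → C(Ω, ℝ),
      (∀ e ∈ E, ∀ x y : Ω, φ e x + ψ e y ≤ c e x y) ∧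
      (∑ u : V, sInf (Set.range (fun x : Ω => f u x - Afun E φ ψ u x)) =
        sSup {r : ℝ | ∃ φ' ψ' : V × V → C(Ω, ℝ),
          (∀ e ∈ E, ∀ x y : Ω, φ' e x + ψ' e y ≤ c e x y) ∧
          r = ∑ u : V, sInf (Set.range (fun x : Ω => f u x - Afun E φ' ψ' u x))}) ∧
      (∀ e ∈ E,
        IsCConcave (c e) (φ e) ∧
        (∀ y : Ω, ψ e y = ⨅ x : Ω, (c e x y - φ e x)) ∧
        (∀ x y : Ω, |φ e x - φ e y| ≤ ω e (dist x y)) ∧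
        (∀ x y : Ω, |ψ e x - ψ e y| ≤ ω e (dist x y))) := by
  have hmod : ∀ e ∈ E, IsModulusOfContinuity (ω e) (uncurry (c e)) := fun e he =>
    let ⟨hmono, h0, hcont, hc⟩ := hω e he
    ⟨hmono, h0, hcont, hc⟩
  let x₀ : Ω := Classical.arbitrary Ω
  have improve := fun (p : V × V → C(Ω, ℝ) × C(Ω, ℝ)) hp =>
    exists_mem_normalizedFamilies_dualValue_le (p := p) hf hmod x₀ hp
  obtain ⟨p₀, hp₀⟩ : ∃ p₀ : V × V → C(Ω, ℝ) × C(Ω, ℝ), ∀ e ∈ E, p₀ e ∈ feasiblePairs (c e) := by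
    choose! p₀ hp₀ using fun e he => nonempty_feasiblePairs (hmod e he).continuous
    exact ⟨p₀, hp₀⟩
  obtain ⟨p₁, hp₁, -⟩ := improve _ hp₀
  obtain ⟨p, hp, hmax⟩ := (isCompact_normalizedFamilies hmod x₀).exists_isMaxOn ⟨p₁, hp₁⟩
    (continuous_dualValue hf).continuousOn
  obtain ⟨q, hq, hpq, hconj⟩ :=
    improve _ fun e he => (mem_normalizedPairs_of_mem_normalizedFamilies hp he).2
  have hqE : ∀ e ∈ E, q e ∈ normalizedPairs (c e) (ω e) x₀ := fun e he =>
    mem_normalizedPairs_of_mem_normalizedFamilies hq he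
  refine ⟨fun e => (q e).1, fun e => (q e).2, fun e he => (hqE e he).2, ?_, fun e he =>
    ⟨(hconj e he).isCConcave, congrFun (hconj e he).2, (hqE e he).1.1.1, (hqE e he).1.2.1⟩⟩
  symm
  refine IsGreatest.csSup_eq ⟨⟨_, _, fun e he => (hqE e he).2, rfl⟩, ?_⟩
  rintro r ⟨φ', ψ', hfeas, rfl⟩
  obtain ⟨q', hq', hle, -⟩ := improve (fun e => (φ' e, ψ' e)) hfeas
  exact hle.trans ((isMaxOn_iff.1 hmax q' hq').trans hpq)

/-- existence of a maximizer `(φ, ψ)` of the dual problem (R-D) such that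
`φ_e` is `f_e`-concave, `ψ_e = (φ_e)^{f_e}` is the `f_e`-transform of `φ_e`, and both
inherit the modulus of continuity `ω_e` of `f_e`. -/
theorem stmt_3 {Ω : Type*} [MetricSpace Ω] [CompactSpace Ω] [Nonempty Ω]
    (V : Type*) [Fintype V] [DecidableEq V] (E : Finset (V × V))
    (f : V → Ω → ℝ) (c : V × V → Ω → Ω → ℝ) (ω : V × V → ℝ → ℝ)
    (hf : ∀ u : V, LowerSemicontinuous (f u))
    (hc : ∀ e ∈ E, Continuous (fun p : Ω × Ω => c e p.1 p.2))
    (hω : ∀ e ∈ E, MonotoneOn (ω e) (Set.Ici (0 : ℝ)) ∧ ω e 0 = 0 ∧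
      ContinuousAt (ω e) 0 ∧
      ∀ p q : Ω × Ω, |c e p.1 p.2 - c e q.1 q.2| ≤ ω e (dist p q)) :
    ∃ φ ψ : V × V → C(Ω, ℝ),
      (∀ e ∈ E, ∀ x y : Ω, φ e x + ψ e y ≤ c e x y) ∧
      (∑ u : V, sInf (Set.range (fun x : Ω => f u x - Afun E φ ψ u x)) =
        sSup {r : ℝ | ∃ φ' ψ' : V × V → C(Ω, ℝ),
          (∀ e ∈ E, ∀ x y : Ω, φ' e x + ψ' e y ≤ c e x y) ∧
          r = ∑ u : V, sInf (Set.range (fun x : Ω => f u x - Afun E φ' ψ' u x))}) ∧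
      (∀ e ∈ E,
        IsCConcave (c e) (φ e) ∧
        (∀ y : Ω, ψ e y = ⨅ x : Ω, (c e x y - φ e x)) ∧
        (∀ x y : Ω, |φ e x - φ e y| ≤ ω e (dist x y)) ∧
        (∀ x y : Ω, |ψ e x - ψ e y| ≤ ω e (dist x y))) :=
  stmt_3_general V E f c ω hf hω
end

section
/- For any two points x, x' on the unit sphere S^m ⊂ ℝ^{m+1}, there exists a rotation R ∈ SO(m+1) such that R x = x' and the minimum over y ∈ S^m of ⟨y, R y⟩ equals ⟨x, x'⟩. -/
/-!
Take `R = ρ_w ∘ ρ_x`, where `ρ_v` is the reflection in the hyperplane `v^⊥` and `w` is a unit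
vector with `ρ_w (-x) = x'`: `w ∥ x + x'`, or, when `x' = -x`, any unit `w ⊥ x` (this needs
`m ≥ 1`). A product of two reflections lies in `SO(m+1)`, and `R x = ρ_w (-x) = x'`.
Expanding `ρ_w (-x) = -x + 2⟪w, x⟫ w` gives `⟪x, x'⟫ = 2⟪x, w⟫² - 1`, while for every `y`
the difference `⟪y, R y⟫ - (2⟪x, w⟫² - 1)‖y‖²` is twice the Gram determinant of `x, w, y`,
hence nonnegative.
-/

open scoped RealInnerProductSpace Matrix

open Module Submodule Matrix

section Reflection

variable {E : Type*} [NormedAddCommGroup E] [InnerProductSpace ℝ E]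

theorem Submodule.reflection_orthogonalComplement_singleton_apply {u : E} (hu : ‖u‖ = 1)
    (y : E) : reflection (ℝ ∙ u)ᗮ y = y - (2 * ⟪u, y⟫) • u := by
  rw [reflection_orthogonal_apply, reflection_singleton_apply, hu]
  simp only [RCLike.ofReal_real_eq_id, id, one_pow, div_one]
  module

theorem Submodule.det_reflection_orthogonalComplement_singleton [FiniteDimensional ℝ E] {v : E}
    (hv : v ≠ 0) : LinearMap.det (reflection (ℝ ∙ v)ᗮ).toLinearMap = -1 := by
  rw [det_reflection, orthogonal_orthogonal, finrank_span_singleton hv, pow_one]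

theorem Submodule.det_reflection_trans_reflection [FiniteDimensional ℝ E] {u w : E}
    (hu : u ≠ 0) (hw : w ≠ 0) :
    LinearMap.det ((reflection (ℝ ∙ u)ᗮ).trans (reflection (ℝ ∙ w)ᗮ)).toLinearMap = 1 := by
  change LinearMap.det ((reflection (ℝ ∙ w)ᗮ).toLinearMap ∘ₗ (reflection (ℝ ∙ u)ᗮ).toLinearMap) = 1
  rw [LinearMap.det_comp, det_reflection_orthogonalComplement_singleton hw,
    det_reflection_orthogonalComplement_singleton hu]
  norm_num

theorem gram_det_nonneg_of_norm_eq_one {u w : E} (hu : ‖u‖ = 1) (hw : ‖w‖ = 1) (y : E) :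
    ⟪u, y⟫ ^ 2 + ⟪w, y⟫ ^ 2 - 2 * ⟪u, y⟫ * ⟪w, y⟫ * ⟪u, w⟫ ≤ (1 - ⟪u, w⟫ ^ 2) * ‖y‖ ^ 2 := by
  have h := (posSemidef_gram ℝ ![u, w, y]).det_nonneg
  simp only [gram, det_fin_three, of_apply, cons_val_zero, cons_val_one, cons_val,
    real_inner_self_eq_norm_sq, hu, hw, one_pow, one_mul, mul_one, real_inner_comm] at h
  linarith

theorem inner_reflection_reflection_ge {u w : E} (hu : ‖u‖ = 1) (hw : ‖w‖ = 1) (y : E) :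
    (2 * ⟪u, w⟫ ^ 2 - 1) * ‖y‖ ^ 2 ≤ ⟪y, reflection (ℝ ∙ w)ᗮ (reflection (ℝ ∙ u)ᗮ y)⟫ := by
  have h := gram_det_nonneg_of_norm_eq_one hu hw y
  rw [reflection_orthogonalComplement_singleton_apply hw,
    reflection_orthogonalComplement_singleton_apply hu]
  simp only [inner_sub_right, inner_smul_right, real_inner_self_eq_norm_sq]
  rw [real_inner_comm y u, real_inner_comm y w, real_inner_comm w u] at h ⊢
  linarith

theorem exists_norm_eq_one_inner_eq_zero [FiniteDimensional ℝ E] (hE : 2 ≤ finrank ℝ E)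
    (x : E) : ∃ w : E, ‖w‖ = 1 ∧ ⟪x, w⟫ = 0 := by
  have hK : 0 < finrank ℝ (ℝ ∙ x)ᗮ := by
    have := (ℝ ∙ x).finrank_add_finrank_orthogonal
    have : finrank ℝ (ℝ ∙ x) ≤ 1 := by simpa using finrank_span_le_card (R := ℝ) {x}
    omega
  obtain ⟨v, hv⟩ := finrank_pos_iff_exists_ne_zero.mp hK
  have hv' : (v : E) ≠ 0 := by simpa using hv
  refine ⟨‖(v : E)‖⁻¹ • (v : E), norm_smul_inv_norm hv', ?_⟩
  rw [inner_smul_right, mem_orthogonal_singleton_iff_inner_right.mp v.2, mul_zero]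

theorem exists_norm_eq_one_reflection_neg_eq [FiniteDimensional ℝ E] (hE : 2 ≤ finrank ℝ E)
    {x x' : E} (h : ‖x‖ = ‖x'‖) : ∃ w : E, ‖w‖ = 1 ∧ reflection (ℝ ∙ w)ᗮ (-x) = x' := by
  by_cases hx' : x' = -x
  · obtain ⟨w, hw, hxw⟩ := exists_norm_eq_one_inner_eq_zero hE x
    refine ⟨w, hw, ?_⟩
    rw [hx', reflection_mem_subspace_eq_self]
    rw [mem_orthogonal_singleton_iff_inner_right, inner_neg_right, real_inner_comm, hxw, neg_zero]
  · have hv : -x - x' ≠ 0 := by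
      intro h0
      apply hx'
      linear_combination (norm := module) -h0
    refine ⟨‖-x - x'‖⁻¹ • (-x - x'), norm_smul_inv_norm hv, ?_⟩
    simp only [span_singleton_smul_eq (inv_ne_zero (norm_ne_zero_iff.mpr hv)).isUnit]
    exact reflection_sub (by rwa [norm_neg])

end Reflection

section EuclideanMatrix

variable {ι : Type*} [Fintype ι] [DecidableEq ι]

theorem Matrix.det_toEuclideanLin (R : Matrix ι ι ℝ) :
    LinearMap.det (toEuclideanLin R) = R.det := by
  rw [toEuclideanLin_eq_toLin_orthonormal, LinearMap.det_toLin]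

theorem Matrix.transpose_mul_self_of_toEuclideanLin_eq {R : Matrix ι ι ℝ}
    {f : EuclideanSpace ℝ ι ≃ₗᵢ[ℝ] EuclideanSpace ℝ ι} (h : toEuclideanLin R = f.toLinearMap) :
    Rᵀ * R = 1 := by
  have hR : R = LinearMap.toMatrix (EuclideanSpace.basisFun ι ℝ).toBasis
      (EuclideanSpace.basisFun ι ℝ).toBasis f.toLinearMap := by
    rw [← h, toEuclideanLin_eq_toLin_orthonormal, LinearMap.toMatrix_toLin]
  have := f.toMatrix_mem_unitaryGroup (EuclideanSpace.basisFun ι ℝ) (EuclideanSpace.basisFun ι ℝ)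
  rwa [← hR, mem_unitaryGroup_iff', star_eq_conjTranspose,
    conjTranspose_eq_transpose_of_trivial] at this

end EuclideanMatrix

/-- for any two points `x, x'` on the unit sphere `S^m ⊆ ℝ^{m+1}` there is a
rotation `R ∈ SO(m+1)` with `R x = x'` such that the minimum of `⟨y, R y⟩` over
`y ∈ S^m` equals `⟨x, x'⟩`. -/
theorem stmt_9 (m : ℕ) (hm : 1 ≤ m)
    (x x' : Metric.sphere (0 : EuclideanSpace ℝ (Fin (m + 1))) 1) :
    ∃ R : Matrix (Fin (m + 1)) (Fin (m + 1)) ℝ,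
      Rᵀ * R = 1 ∧ R.det = 1 ∧
      Matrix.toEuclideanLin R (x : EuclideanSpace ℝ (Fin (m + 1))) =
        (x' : EuclideanSpace ℝ (Fin (m + 1))) ∧
      IsLeast {r : ℝ | ∃ y : Metric.sphere (0 : EuclideanSpace ℝ (Fin (m + 1))) 1,
          r = ⟪(y : EuclideanSpace ℝ (Fin (m + 1))),
                Matrix.toEuclideanLin R (y : EuclideanSpace ℝ (Fin (m + 1)))⟫}
        ⟪(x : EuclideanSpace ℝ (Fin (m + 1))), (x' : EuclideanSpace ℝ (Fin (m + 1)))⟫ := by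
  have hx := norm_eq_of_mem_sphere x
  obtain ⟨w, hw, hwx⟩ := exists_norm_eq_one_reflection_neg_eq
    (by rw [finrank_euclideanSpace_fin]; omega) (hx.trans (norm_eq_of_mem_sphere x').symm)
  let f := (reflection (ℝ ∙ (x : EuclideanSpace ℝ (Fin (m + 1))))ᗮ).trans (reflection (ℝ ∙ w)ᗮ)
  let R := toEuclideanLin.symm f.toLinearMap
  have hR : toEuclideanLin R = f.toLinearMap := toEuclideanLin.apply_symm_apply _
  have hfx : f x = x' := by
    simp [f, reflection_orthogonalComplement_singleton_eq_neg, hwx]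
  have hxx' : ⟪(x : EuclideanSpace ℝ (Fin (m + 1))), x'⟫ =
      2 * ⟪(x : EuclideanSpace ℝ (Fin (m + 1))), w⟫ ^ 2 - 1 := by
    rw [← hwx, reflection_orthogonalComplement_singleton_apply hw]
    simp only [inner_sub_right, inner_neg_right, inner_smul_right, real_inner_self_eq_norm_sq, hx,
      real_inner_comm w]
    ring
  refine ⟨R, transpose_mul_self_of_toEuclideanLin_eq hR, ?_, by rw [hR]; exact hfx,
    ⟨x, by rw [hR]; exact congrArg _ hfx.symm⟩, ?_⟩
  · rw [← det_toEuclideanLin, hR]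
    exact det_reflection_trans_reflection (ne_zero_of_mem_unit_sphere x)
      (norm_ne_zero_iff.mp (hw.trans_ne one_ne_zero))
  · rintro r ⟨y, rfl⟩
    simpa [hR, f, hxx', norm_eq_of_mem_sphere y] using inner_reflection_reflection_ge hx hw y
end

section
/- Relative error of the degree-1 approximation of the geodesic Wasserstein distance between two Diracs: for x, y ∈ S^m with geodesic distance d_g(x,y) = θ, the supremum of ⟨c, y⟩ − ⟨c, x⟩ over all c ∈ ℝ^{m+1} such that z ↦ ⟨c,z⟩ is 1-Lipschitz on S^m with respect to d_g equals ‖y − x‖ = 2 sin(θ/2). Hence the ratio between this degree-1 dual value and OT_{d_g}(δ_x, δ_y) = θ is ε = sin(θ/2)/(θ/2). -/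
/-
The chord `‖y - x‖ = 2 sin (θ / 2)` never exceeds the arc `θ`, so `c = (y - x) / ‖y - x‖` is
admissible and attains `‖y - x‖`. Conversely, for `m ≥ 1` there is a unit vector `v ⊥ c`; along the
great circle from `v` towards `c`, the functional `⟪c, ·⟫` grows by `‖c‖ sin t` over arc length `t`,
so the Lipschitz condition forces `‖c‖ sin t ≤ t`, hence `‖c‖ ≤ 1` as `t → 0`, and Cauchy–Schwarz
bounds `⟪c, y - x⟫` by `‖y - x‖`. A coupling of `δ_x` and `δ_y` is concentrated at `(x, y)`, so
`OT(δ_x, δ_y) = d_g(x, y)`.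
-/

open MeasureTheory
open scoped RealInnerProductSpace

/-- The unit sphere `S^m ⊆ ℝ^{m+1}`. -/
abbrev Sph (m : ℕ) := (Metric.sphere (0 : EuclideanSpace ℝ (Fin (m + 1))) 1 :
  Set (EuclideanSpace ℝ (Fin (m + 1))))

/-- Geodesic distance on the unit sphere: `d_g(x, y) = arccos ⟨x, y⟩`. -/
noncomputable def geod {m : ℕ} (x y : Sph m) : ℝ :=
  Real.arccos ⟪(x : EuclideanSpace ℝ (Fin (m + 1))), (y : EuclideanSpace ℝ (Fin (m + 1)))⟫

/-- Optimal transport cost between two measures with cost `c`. -/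
noncomputable def OTcost {Ω : Type*} [MeasurableSpace Ω]
    (c : Ω → Ω → ℝ) (μ ν : Measure Ω) : ℝ :=
  sInf {r : ℝ | ∃ π : Measure (Ω × Ω), IsProbabilityMeasure π ∧
    π.map Prod.fst = μ ∧ π.map Prod.snd = ν ∧ r = ∫ p, c p.1 p.2 ∂π}

open InnerProductGeometry Real Filter Topology

section InnerProductSpace

variable {V : Type*} [NormedAddCommGroup V] [InnerProductSpace ℝ V]

theorem norm_sub_eq_two_mul_sin_angle_div_two {x y : V} (hx : ‖x‖ = 1) (hy : ‖y‖ = 1) :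
    ‖x - y‖ = 2 * sin (angle x y / 2) := by
  have hsin : 0 ≤ sin (angle x y / 2) :=
    sin_nonneg_of_nonneg_of_le_pi (by linarith [angle_nonneg x y])
      (by linarith [angle_le_pi x y, pi_pos])
  refine (sq_eq_sq₀ (norm_nonneg _) (by positivity)).mp ?_
  rw [sq, norm_sub_sq_eq_norm_sq_add_norm_sq_sub_two_mul_norm_mul_norm_mul_cos_angle, hx, hy,
    mul_pow, sin_sq_eq_half_sub, mul_div_cancel₀ _ two_ne_zero]
  ring

theorem norm_sub_le_angle {x y : V} (hx : ‖x‖ = 1) (hy : ‖y‖ = 1) : ‖x - y‖ ≤ angle x y := by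
  rw [norm_sub_eq_two_mul_sin_angle_div_two hx hy]
  linarith [sin_le (by linarith [angle_nonneg x y] : 0 ≤ angle x y / 2)]

theorem exists_norm_eq_one_inner_eq_zero_s15 [FiniteDimensional ℝ V] (hV : 1 < Module.finrank ℝ V)
    (c : V) : ∃ v : V, ‖v‖ = 1 ∧ ⟪c, v⟫ = 0 := by
  have hrank : 0 < Module.finrank ℝ (ℝ ∙ c)ᗮ := by
    have := (ℝ ∙ c).finrank_add_finrank_orthogonal
    have : Module.finrank ℝ (ℝ ∙ c) ≤ 1 := (finrank_span_le_card ({c} : Set V)).trans (by simp)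
    omega
  obtain ⟨v, hv, hv0⟩ :=
    Submodule.exists_mem_ne_zero_of_ne_bot (Submodule.one_le_finrank_iff.mp hrank)
  exact ⟨‖v‖⁻¹ • v, norm_smul_inv_norm hv0, by
    rw [real_inner_smul_right, Submodule.mem_orthogonal_singleton_iff_inner_right.mp hv, mul_zero]⟩

theorem le_one_of_forall_mul_sin_le {a : ℝ} (h : ∀ t ∈ Set.Ioc 0 π, a * sin t ≤ t) : a ≤ 1 := by
  have hlim : Tendsto (fun t => a * sinc t) (𝓝[>] 0) (𝓝 a) := by
    simpa using ((continuous_sinc.tendsto 0).const_mul a).mono_left nhdsWithin_le_nhds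
  refine le_of_tendsto hlim ?_
  filter_upwards [Ioc_mem_nhdsGT pi_pos] with t ht
  rw [sinc_of_ne_zero ht.1.ne', ← mul_div_assoc, div_le_one ht.1]
  exact h t ht

section GreatCircle

variable {u v : V} (hu : ‖u‖ = 1) (hv : ‖v‖ = 1) (huv : ⟪u, v⟫ = 0)
include hu hv huv

theorem norm_cos_smul_add_sin_smul (t : ℝ) : ‖cos t • u + sin t • v‖ = 1 := by
  have hsq : ‖cos t • u + sin t • v‖ ^ 2 = 1 := by
    rw [sq, norm_add_sq_eq_norm_sq_add_norm_sq_real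
      (by rw [real_inner_smul_left, real_inner_smul_right, huv, mul_zero, mul_zero]),
      norm_smul, norm_smul, hu, hv, Real.norm_eq_abs, Real.norm_eq_abs]
    simp only [mul_one, ← sq, sq_abs, cos_sq_add_sin_sq]
  exact (pow_eq_one_iff_of_nonneg (norm_nonneg _) two_ne_zero).mp hsq

theorem angle_cos_smul_add_sin_smul {t : ℝ} (ht₀ : 0 ≤ t) (htπ : t ≤ π) :
    angle (cos t • u + sin t • v) u = t := by
  rw [angle, norm_cos_smul_add_sin_smul hu hv huv, hu, inner_add_left, real_inner_smul_left,
    real_inner_smul_left, real_inner_self_eq_norm_sq, hu, real_inner_comm, huv]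
  simpa using arccos_cos ht₀ htπ

end GreatCircle

theorem norm_le_one_of_inner_sub_le_angle [FiniteDimensional ℝ V] (hV : 1 < Module.finrank ℝ V)
    {c : V} (hc : ∀ x y : V, ‖x‖ = 1 → ‖y‖ = 1 → ⟪c, x⟫ - ⟪c, y⟫ ≤ angle x y) : ‖c‖ ≤ 1 := by
  rcases eq_or_ne c 0 with rfl | hc0
  · simp
  obtain ⟨v, hv, hcv⟩ := exists_norm_eq_one_inner_eq_zero_s15 hV c
  set u := ‖c‖⁻¹ • c
  have hu : ‖u‖ = 1 := norm_smul_inv_norm hc0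
  have hvu : ⟪v, u⟫ = 0 := by rw [real_inner_smul_right, real_inner_comm, hcv, mul_zero]
  have hcu : ⟪c, u⟫ = ‖c‖ := by
    rw [real_inner_smul_right, real_inner_self_eq_norm_sq, sq,
      inv_mul_cancel_left₀ (norm_ne_zero_iff.mpr hc0)]
  refine le_one_of_forall_mul_sin_le fun t ht => ?_
  have := hc _ v (norm_cos_smul_add_sin_smul hv hu hvu t) hv
  rwa [angle_cos_smul_add_sin_smul hv hu hvu ht.1.le ht.2, inner_add_right, real_inner_smul_right,
    real_inner_smul_right, hcv, hcu, mul_zero, zero_add, sub_zero, mul_comm] at this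

end InnerProductSpace

theorem ae_eq_of_map_eq_dirac {α β : Type*} [MeasurableSpace α] [MeasurableSpace β]
    [MeasurableSingletonClass β] {μ : Measure α} {f : α → β} (hf : Measurable f) {b : β}
    (h : μ.map f = Measure.dirac b) : ∀ᵐ a ∂μ, f a = b :=
  ae_of_ae_map (p := (· = b)) hf.aemeasurable <| by
    rw [h, ae_dirac_eq]
    exact eventually_pure.mpr rfl

theorem OTcost_dirac_dirac {Ω : Type*} [MeasurableSpace Ω] [MeasurableSingletonClass Ω]
    (c : Ω → Ω → ℝ) (x y : Ω) : OTcost c (Measure.dirac x) (Measure.dirac y) = c x y := by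
  suffices h : {r : ℝ | ∃ γ : Measure (Ω × Ω), IsProbabilityMeasure γ ∧
      γ.map Prod.fst = Measure.dirac x ∧ γ.map Prod.snd = Measure.dirac y ∧
      r = ∫ p, c p.1 p.2 ∂γ} = {c x y} by rw [OTcost, h, csInf_singleton]
  refine Set.eq_singleton_iff_unique_mem.mpr ⟨⟨Measure.dirac (x, y), inferInstance,
    Measure.map_dirac' measurable_fst _, Measure.map_dirac' measurable_snd _,
    (integral_dirac (fun p : Ω × Ω => c p.1 p.2) (x, y)).symm⟩, ?_⟩
  rintro _ ⟨γ, hγ, hfst, hsnd, rfl⟩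
  have hxy : (fun p : Ω × Ω => c p.1 p.2) =ᵐ[γ] fun _ => c x y := by
    filter_upwards [ae_eq_of_map_eq_dirac measurable_fst hfst,
      ae_eq_of_map_eq_dirac measurable_snd hsnd] with p h₁ h₂
    rw [h₁, h₂]
  simp [integral_congr_ae hxy]

section Sphere

variable {m : ℕ}

theorem norm_coe_sph (z : Sph m) : ‖(z : EuclideanSpace ℝ (Fin (m + 1)))‖ = 1 :=
  mem_sphere_zero_iff_norm.mp z.2

theorem geod_eq_angle (z w : Sph m) : geod z w = angle (z : EuclideanSpace ℝ (Fin (m + 1))) w := by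
  rw [geod, angle, norm_coe_sph z, norm_coe_sph w, mul_one, div_one]

theorem abs_inner_sub_le_geod {c : EuclideanSpace ℝ (Fin (m + 1))} (hc : ‖c‖ ≤ 1) (z w : Sph m) :
    |⟪c, (z : EuclideanSpace ℝ (Fin (m + 1)))⟫ - ⟪c, (w : EuclideanSpace ℝ (Fin (m + 1)))⟫| ≤
      geod z w :=
  calc |⟪c, (z : EuclideanSpace ℝ (Fin (m + 1)))⟫ - ⟪c, (w : EuclideanSpace ℝ (Fin (m + 1)))⟫|
      = |⟪c, (z : EuclideanSpace ℝ (Fin (m + 1))) - w⟫| := by rw [inner_sub_right]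
    _ ≤ ‖c‖ * ‖(z : EuclideanSpace ℝ (Fin (m + 1))) - w‖ := abs_real_inner_le_norm _ _
    _ ≤ ‖(z : EuclideanSpace ℝ (Fin (m + 1))) - w‖ := mul_le_of_le_one_left (norm_nonneg _) hc
    _ ≤ geod z w := by
      rw [geod_eq_angle]; exact norm_sub_le_angle (norm_coe_sph z) (norm_coe_sph w)

theorem norm_le_one_of_abs_inner_sub_le_geod (hm : 1 ≤ m) {c : EuclideanSpace ℝ (Fin (m + 1))}
    (hc : ∀ z w : Sph m, |⟪c, (z : EuclideanSpace ℝ (Fin (m + 1)))⟫ -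
      ⟪c, (w : EuclideanSpace ℝ (Fin (m + 1)))⟫| ≤ geod z w) : ‖c‖ ≤ 1 := by
  refine norm_le_one_of_inner_sub_le_angle (by rw [finrank_euclideanSpace_fin]; omega)
    fun x y hx hy => ?_
  have := hc ⟨x, mem_sphere_zero_iff_norm.mpr hx⟩ ⟨y, mem_sphere_zero_iff_norm.mpr hy⟩
  rw [geod_eq_angle] at this
  exact (le_abs_self _).trans this

theorem isGreatest_inner_sub_of_abs_inner_sub_le_geod (hm : 1 ≤ m) (x y : Sph m) :
    IsGreatest {r : ℝ | ∃ c : EuclideanSpace ℝ (Fin (m + 1)),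
        (∀ z w : Sph m, |⟪c, (z : EuclideanSpace ℝ (Fin (m + 1)))⟫ -
            ⟪c, (w : EuclideanSpace ℝ (Fin (m + 1)))⟫| ≤ geod z w) ∧
        r = ⟪c, (y : EuclideanSpace ℝ (Fin (m + 1)))⟫ -
          ⟪c, (x : EuclideanSpace ℝ (Fin (m + 1)))⟫}
      ‖(y : EuclideanSpace ℝ (Fin (m + 1))) - (x : EuclideanSpace ℝ (Fin (m + 1)))‖ := by
  set d := (y : EuclideanSpace ℝ (Fin (m + 1))) - x
  -- For `d = 0` the witness is `c = 0`, since `‖0‖⁻¹ = 0`; no case split on `x = y` is needed.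
  refine ⟨⟨‖d‖⁻¹ • d, abs_inner_sub_le_geod ?_, ?_⟩, ?_⟩
  · rw [norm_smul, norm_inv, norm_norm]
    exact inv_mul_le_one_of_le₀ le_rfl (norm_nonneg _)
  · rw [← inner_sub_right, real_inner_smul_left, real_inner_self_eq_norm_sq, sq, inv_mul_eq_div,
      mul_self_div_self]
  · rintro _ ⟨c, hc, rfl⟩
    calc ⟪c, (y : EuclideanSpace ℝ (Fin (m + 1)))⟫ - ⟪c, (x : EuclideanSpace ℝ (Fin (m + 1)))⟫
        = ⟪c, d⟫ := (inner_sub_right _ _ _).symm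
      _ ≤ ‖c‖ * ‖d‖ := real_inner_le_norm _ _
      _ ≤ ‖d‖ := mul_le_of_le_one_left (norm_nonneg _) (norm_le_one_of_abs_inner_sub_le_geod hm hc)

end Sphere

/-- for `x, y ∈ S^m` with `d_g(x, y) = θ`, the supremum of
`⟨c, y⟩ − ⟨c, x⟩` over all `c` whose linear functional is `1`-Lipschitz on `S^m` for the
geodesic distance equals `‖y − x‖ = 2 sin(θ/2)`; since `OT_{d_g}(δ_x, δ_y) = θ`, the
ratio between this degree-1 dual value and `OT_{d_g}(δ_x, δ_y)` is `sin(θ/2)/(θ/2)`. -/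
theorem stmt_15 (m : ℕ) (hm : 1 ≤ m) (x y : Sph m) :
    sSup {r : ℝ | ∃ c : EuclideanSpace ℝ (Fin (m + 1)),
        (∀ z w : Sph m, |⟪c, (z : EuclideanSpace ℝ (Fin (m + 1)))⟫ -
            ⟪c, (w : EuclideanSpace ℝ (Fin (m + 1)))⟫| ≤ geod z w) ∧
        r = ⟪c, (y : EuclideanSpace ℝ (Fin (m + 1)))⟫ -
          ⟪c, (x : EuclideanSpace ℝ (Fin (m + 1)))⟫} =
      ‖(y : EuclideanSpace ℝ (Fin (m + 1))) - (x : EuclideanSpace ℝ (Fin (m + 1)))‖ ∧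
    ‖(y : EuclideanSpace ℝ (Fin (m + 1))) - (x : EuclideanSpace ℝ (Fin (m + 1)))‖ =
      2 * Real.sin (geod x y / 2) ∧
    OTcost geod (Measure.dirac x) (Measure.dirac y) = geod x y ∧
    (geod x y ≠ 0 →
      sSup {r : ℝ | ∃ c : EuclideanSpace ℝ (Fin (m + 1)),
          (∀ z w : Sph m, |⟪c, (z : EuclideanSpace ℝ (Fin (m + 1)))⟫ -
              ⟪c, (w : EuclideanSpace ℝ (Fin (m + 1)))⟫| ≤ geod z w) ∧
          r = ⟪c, (y : EuclideanSpace ℝ (Fin (m + 1)))⟫ -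
            ⟪c, (x : EuclideanSpace ℝ (Fin (m + 1)))⟫} /
        OTcost geod (Measure.dirac x) (Measure.dirac y) =
      Real.sin (geod x y / 2) / (geod x y / 2)) := by
  have hsup := (isGreatest_inner_sub_of_abs_inner_sub_le_geod hm x y).csSup_eq
  have hchord : ‖(y : EuclideanSpace ℝ (Fin (m + 1))) - (x : EuclideanSpace ℝ (Fin (m + 1)))‖ =
      2 * sin (geod x y / 2) := by
    rw [geod_eq_angle, angle_comm,
      norm_sub_eq_two_mul_sin_angle_div_two (norm_coe_sph y) (norm_coe_sph x)]
  refine ⟨hsup, hchord, OTcost_dirac_dirac geod x y, fun _ => ?_⟩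
  rw [hsup, OTcost_dirac_dirac, hchord]
  ring
end
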